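/- arXiv:2112.14067 — 3 statements merged into one kernel-verified Lean document; each statement's English description precedes it below -/
import Mathlib

section
/- Let m be a positive integer, q = 2^m ≥ 4, and let α = (α_1,…,α_q) be an enumeration of all elements of F_{2^m}. Then the complete weight enumerator of ERS_3(α) satisfies W(ERS_3(α)) = ∑_{ρ∈F_{2^m}} w_0 w_ρ^{2^m} + (2^m−1)·2^m · w_0 ∏_{ρ∈F_{2^m}} w_ρ + 2^m ∑_{γ_2∈F_{2^m}^*} w_{γ_2} ∏_{ρ∈F_{2^m}} w_ρ + ∑_{γ_2∈F_{2^m}^*} ∑_{γ_1∈F_{2^m}^*} ∑_{γ_0∈F_{2^m}} w_{γ_2} ∏_{ρ∈F_{2^m}, Tr(ρ)=0} w_{γ_1 ρ + γ_0}^2. -/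
/-!
Group the codewords by the leading coefficient `a₂`. For `a₂ = 0` the evaluation map
`x ↦ a₁ x + a₀` is constant or a permutation of `F`. For `a₂ ≠ 0` and `a₁ = 0`, the map
`x ↦ a₂ x² + a₀` is a permutation because squaring is bijective in characteristic 2.
For `a₁ ≠ 0`, the substitution `x = (a₁ / a₂) u` turns `a₂ x² + a₁ x + a₀` into
`(a₁² / a₂) (u² + u) + a₀`, and `u ↦ u² + u` is two-to-one onto the kernel of the trace
(additive Hilbert 90): its image lies in that kernel and both have `q / 2` elements.
Finally `a₁ ↦ a₁² / a₂` permutes `F^*`.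
-/

open MvPolynomial Finset

theorem Fintype.sum_eq_add_sum_filter_ne {ι M : Type*} [Fintype ι] [DecidableEq ι]
    [AddCommMonoid M] (a : ι) (f : ι → M) : ∑ i, f i = f a + ∑ i with i ≠ a, f i := by
  rw [filter_ne', ← add_sum_erase _ _ (mem_univ a)]

theorem trace_pow_card {K L : Type*} [Field K] [Fintype K] [Field L] [Finite L] [Algebra K L]
    (x : L) : Algebra.trace K L (x ^ Fintype.card K) = Algebra.trace K L x :=
  Algebra.trace_eq_of_algEquiv (FiniteField.frobeniusAlgEquivOfAlgebraic K L) x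

section CharTwo

variable {F : Type*} [Field F] [CharP F 2]

theorem filter_sq_add_self_eq [Fintype F] [DecidableEq F] (x : F) :
    ({u | u ^ 2 + u = x ^ 2 + x} : Finset F) = {x, x + 1} := by
  ext u
  simp only [mem_filter, mem_univ, true_and, mem_insert, mem_singleton]
  constructor
  · intro h
    have hfactor : (u - x) * (u - (x + 1)) = 0 := by
      linear_combination h + (x ^ 2 - u * x - u + x) * CharTwo.two_eq_zero (R := F)
    rcases mul_eq_zero.mp hfactor with h | h
    · exact .inl (sub_eq_zero.mp h)
    · exact .inr (sub_eq_zero.mp h)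
  · rintro (rfl | rfl)
    · rfl
    · linear_combination (x + 1) * CharTwo.two_eq_zero (R := F)

theorem two_mul_card_image_sq_add_self [Fintype F] [DecidableEq F] :
    2 * #(univ.image fun u : F => u ^ 2 + u) = Fintype.card F := by
  have hfiber : ∀ b ∈ univ.image fun u : F => u ^ 2 + u, #{u | u ^ 2 + u = b} = 2 := by
    intro b hb
    obtain ⟨x, -, rfl⟩ := mem_image.mp hb
    rw [filter_sq_add_self_eq, card_pair (by simp)]
  rw [← card_univ, card_eq_sum_card_image (fun u : F => u ^ 2 + u) univ, sum_congr rfl hfiber,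
    sum_const, smul_eq_mul, mul_comm]

theorem bijective_mul_sq_add [Finite F] {a : F} (ha : a ≠ 0) (b : F) :
    Function.Bijective fun x : F => a * x ^ 2 + b :=
  Finite.injective_iff_bijective.mp fun _ _ h =>
    CharTwo.sq_injective (mul_left_cancel₀ ha (add_right_cancel h))

end CharTwo

section Trace

variable {F : Type*} [Field F] [Fintype F] [Algebra (ZMod 2) F]

theorem two_mul_card_filter_trace_eq_zero :
    2 * #{ρ : F | Algebra.trace (ZMod 2) F ρ = 0} = Fintype.card F := by
  have hone : (1 : ZMod 2) ∈ Set.range (Algebra.trace (ZMod 2) F) :=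
    Algebra.trace_surjective (ZMod 2) F 1
  have hne : ∀ c : ZMod 2, ¬c = 0 ↔ c = 1 := by decide
  calc 2 * #{ρ : F | Algebra.trace (ZMod 2) F ρ = 0}
      = #{ρ : F | Algebra.trace (ZMod 2) F ρ = 0} + #{ρ : F | Algebra.trace (ZMod 2) F ρ = 1} := by
        rw [two_mul, AddMonoidHom.card_fiber_eq_of_mem_range _ ⟨0, map_zero _⟩ hone]
    _ = Fintype.card F := by
        simp only [← hne, card_filter_add_card_filter_not, card_univ]

theorem image_sq_add_self_eq_filter_trace_eq_zero [DecidableEq F] :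
    univ.image (fun u : F => u ^ 2 + u)
      = ({ρ | Algebra.trace (ZMod 2) F ρ = 0} : Finset F) := by
  have : CharP F 2 := charP_of_injective_algebraMap' (ZMod 2) 2
  refine eq_of_subset_of_card_le (fun ρ hρ => ?_) ?_
  · obtain ⟨u, -, rfl⟩ := mem_image.mp hρ
    have htrace : Algebra.trace (ZMod 2) F (u ^ 2) = Algebra.trace (ZMod 2) F u :=
      trace_pow_card u
    simp [htrace, CharTwo.add_self_eq_zero]
  · have := two_mul_card_image_sq_add_self (F := F)
    have := two_mul_card_filter_trace_eq_zero (F := F)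
    omega

theorem prod_comp_sq_add_self [DecidableEq F] {M : Type*} [CommMonoid M] (f : F → M) :
    ∏ u : F, f (u ^ 2 + u) = ∏ ρ : F with Algebra.trace (ZMod 2) F ρ = 0, f ρ ^ 2 := by
  have : CharP F 2 := charP_of_injective_algebraMap' (ZMod 2) 2
  rw [prod_comp, ← image_sq_add_self_eq_filter_trace_eq_zero]
  refine prod_congr rfl fun b hb => ?_
  obtain ⟨x, -, rfl⟩ := mem_image.mp hb
  rw [filter_sq_add_self_eq, card_pair (by simp)]

theorem prod_comp_quadratic {M : Type*} [CommMonoid M] (f : F → M)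
    {a₂ a₁ : F} (ha₂ : a₂ ≠ 0) (ha₁ : a₁ ≠ 0) (a₀ : F) :
    ∏ x : F, f (a₂ * x ^ 2 + a₁ * x + a₀)
      = ∏ ρ : F with Algebra.trace (ZMod 2) F ρ = 0, f (a₁ ^ 2 / a₂ * ρ + a₀) ^ 2 := by
  classical
  have hscale : Function.Bijective fun u : F => a₁ / a₂ * u :=
    (Equiv.mulLeft₀ _ (div_ne_zero ha₁ ha₂)).bijective
  rw [← Fintype.prod_bijective _ hscale _ _ fun _ => rfl, ← prod_comp_sq_add_self]
  refine prod_congr rfl fun u _ => congrArg f ?_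
  field_simp

end Trace

section Enumerator

variable {F R : Type*} [Field F] [Fintype F] [CommSemiring R] (w : F → R)

theorem sum_sum_prod_linear :
    ∑ a₁ : F, ∑ a₀ : F, ∏ x : F, w (a₁ * x + a₀)
      = ∑ ρ : F, w ρ ^ Fintype.card F
        + ((Fintype.card F - 1) * Fintype.card F : ℕ) * ∏ ρ : F, w ρ := by
  classical
  have hline : ∀ a₁ ∈ ({a₁ | a₁ ≠ 0} : Finset F), ∀ a₀ : F,
      ∏ x : F, w (a₁ * x + a₀) = ∏ ρ : F, w ρ := fun a₁ ha₁ a₀ =>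
    Fintype.prod_bijective _ ((Equiv.mulLeft₀ a₁ (mem_filter.mp ha₁).2).trans
      (Equiv.addRight a₀)).bijective _ _ fun _ => rfl
  rw [Fintype.sum_eq_add_sum_filter_ne 0,
    sum_congr rfl fun a₁ ha₁ => sum_congr rfl fun a₀ _ => hline a₁ ha₁ a₀]
  simp [filter_ne', card_univ, sum_const, nsmul_eq_mul, mul_assoc]

theorem sum_sum_prod_quadratic [DecidableEq F] [Algebra (ZMod 2) F] {a₂ : F} (ha₂ : a₂ ≠ 0) :
    ∑ a₁ : F, ∑ a₀ : F, ∏ x : F, w (a₂ * x ^ 2 + a₁ * x + a₀)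
      = (Fintype.card F : R) * ∏ ρ : F, w ρ
        + ∑ γ₁ : F with γ₁ ≠ 0, ∑ γ₀ : F,
            ∏ ρ : F with Algebra.trace (ZMod 2) F ρ = 0, w (γ₁ * ρ + γ₀) ^ 2 := by
  have : CharP F 2 := charP_of_injective_algebraMap' (ZMod 2) 2
  have hsq : ∀ a₀ : F, ∏ x : F, w (a₂ * x ^ 2 + 0 * x + a₀) = ∏ ρ : F, w ρ := fun a₀ =>
    Fintype.prod_bijective _ (bijective_mul_sq_add ha₂ a₀) _ _ fun _ => by rw [zero_mul, add_zero]
  have hquad : ∀ a₁ ∈ ({a₁ | a₁ ≠ 0} : Finset F), ∀ a₀ : F,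
      ∏ x : F, w (a₂ * x ^ 2 + a₁ * x + a₀)
        = ∏ ρ : F with Algebra.trace (ZMod 2) F ρ = 0, w (a₁ ^ 2 / a₂ * ρ + a₀) ^ 2 :=
    fun a₁ ha₁ => prod_comp_quadratic w ha₂ (mem_filter.mp ha₁).2
  rw [Fintype.sum_eq_add_sum_filter_ne 0,
    sum_congr rfl fun a₁ ha₁ => sum_congr rfl fun a₀ _ => hquad a₁ ha₁ a₀]
  simp only [hsq, sum_const, card_univ, nsmul_eq_mul]
  congr 1
  have hsq_div : Function.Bijective fun a₁ : F => a₁ ^ 2 / a₂ :=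
    Finite.injective_iff_bijective.mp fun _ _ h =>
      CharTwo.sq_injective ((div_left_inj' ha₂).mp h)
  exact sum_equiv (.ofBijective _ hsq_div) (by simp [ha₂]) fun _ _ => rfl

end Enumerator

theorem cwe_ERS3_char2_full_general (m : ℕ)
    (F : Type) [Field F] [Fintype F] [DecidableEq F] [Algebra (ZMod 2) F]
    (hcard : Fintype.card F = 2 ^ m)
    (α : Fin (2 ^ m) → F) (hα : Function.Bijective α) :
    (∑ a₀ : F, ∑ a₁ : F, ∑ a₂ : F,
        (X a₂ : MvPolynomial F ℤ) *
          ∏ i : Fin (2 ^ m), (X (a₂ * α i ^ 2 + a₁ * α i + a₀) : MvPolynomial F ℤ))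
      = (∑ ρ : F, (X 0 : MvPolynomial F ℤ) * (X ρ : MvPolynomial F ℤ) ^ (2 ^ m))
        + (((2 ^ m - 1) * 2 ^ m : ℕ) : MvPolynomial F ℤ) *
            ((X 0 : MvPolynomial F ℤ) * ∏ ρ : F, (X ρ : MvPolynomial F ℤ))
        + ((2 ^ m : ℕ) : MvPolynomial F ℤ) *
            ∑ γ₂ ∈ univ.filter (fun γ₂ : F => γ₂ ≠ 0),
              (X γ₂ : MvPolynomial F ℤ) * ∏ ρ : F, (X ρ : MvPolynomial F ℤ)
        + ∑ γ₂ ∈ univ.filter (fun γ₂ : F => γ₂ ≠ 0),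
            ∑ γ₁ ∈ univ.filter (fun γ₁ : F => γ₁ ≠ 0), ∑ γ₀ : F,
              (X γ₂ : MvPolynomial F ℤ) *
                ∏ ρ ∈ univ.filter (fun ρ : F => Algebra.trace (ZMod 2) F ρ = 0),
                  (X (γ₁ * ρ + γ₀) : MvPolynomial F ℤ) ^ 2 := by
  have henum : ∀ a₂ a₁ a₀ : F, ∏ i, (X (a₂ * α i ^ 2 + a₁ * α i + a₀) : MvPolynomial F ℤ)
      = ∏ x, X (a₂ * x ^ 2 + a₁ * x + a₀) :=
    fun _ _ _ => Fintype.prod_bijective α hα _ _ fun _ => rfl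
  simp only [henum, ← hcard]
  rw [sum_comm, sum_comm_cycle]
  simp only [← mul_sum]
  rw [Fintype.sum_eq_add_sum_filter_ne 0]
  simp only [zero_mul, zero_add, sum_sum_prod_linear]
  rw [sum_congr rfl fun a₂ ha₂ =>
    congrArg (X a₂ * ·) (sum_sum_prod_quadratic X (mem_filter.mp ha₂).2)]
  simp only [mul_add, mul_sum, sum_add_distrib,
    mul_left_comm (X _) (Fintype.card F : MvPolynomial F ℤ)]
  ring

/-- Complete weight enumerator of `ERS_3(α)` over `F_{2^m}`, where `α` enumerates all of
`F_{2^m}`. -/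
theorem cwe_ERS3_char2_full (m : ℕ) (hm : 0 < m)
    (F : Type) [Field F] [Fintype F] [DecidableEq F] [Algebra (ZMod 2) F]
    (hcard : Fintype.card F = 2 ^ m) (h4 : 4 ≤ 2 ^ m)
    (α : Fin (2 ^ m) → F) (hα : Function.Bijective α) :
    (∑ a₀ : F, ∑ a₁ : F, ∑ a₂ : F,
        (X a₂ : MvPolynomial F ℤ) *
          ∏ i : Fin (2 ^ m), (X (a₂ * α i ^ 2 + a₁ * α i + a₀) : MvPolynomial F ℤ))
      = (∑ ρ : F, (X 0 : MvPolynomial F ℤ) * (X ρ : MvPolynomial F ℤ) ^ (2 ^ m))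
        + (((2 ^ m - 1) * 2 ^ m : ℕ) : MvPolynomial F ℤ) *
            ((X 0 : MvPolynomial F ℤ) * ∏ ρ : F, (X ρ : MvPolynomial F ℤ))
        + ((2 ^ m : ℕ) : MvPolynomial F ℤ) *
            ∑ γ₂ ∈ univ.filter (fun γ₂ : F => γ₂ ≠ 0),
              (X γ₂ : MvPolynomial F ℤ) * ∏ ρ : F, (X ρ : MvPolynomial F ℤ)
        + ∑ γ₂ ∈ univ.filter (fun γ₂ : F => γ₂ ≠ 0),
            ∑ γ₁ ∈ univ.filter (fun γ₁ : F => γ₁ ≠ 0), ∑ γ₀ : F,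
              (X γ₂ : MvPolynomial F ℤ) *
                ∏ ρ ∈ univ.filter (fun ρ : F => Algebra.trace (ZMod 2) F ρ = 0),
                  (X (γ₁ * ρ + γ₀) : MvPolynomial F ℤ) ^ 2 :=
  cwe_ERS3_char2_full_general m F hcard α hα
end

section
/- Let p be an odd prime, m a positive integer, q = p^m ≥ 3, and let α = (α_1,…,α_q) be an enumeration of all elements of F_q. Then the complete weight enumerator of ERS_3(α) satisfies W(ERS_3(α)) = ∑_{ρ∈F_q} w_0 w_ρ^{q} + (q−1)q · w_0 ∏_{ρ∈F_q} w_ρ + q ∑_{γ_2∈F_q^*} ∑_{γ_1∈F_q} w_{γ_2} w_{γ_1} ∏_{ρ∈F_q∖{γ_1}} w_ρ^{1+η(γ_2)η(ρ−γ_1)}, where for ρ ≠ γ_1 the exponent 1+η(γ_2)η(ρ−γ_1) lies in {0,2}. -/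
/-!
Group the codewords by the leading coefficient `a₂`. For `a₂ = 0` the polynomial is either
constant, of weight `X a₀ ^ q`, or an affine bijection of `F`, of weight `∏ ρ, X ρ`.
For `a₂ ≠ 0`, completing the square shows that the sum over `a₀` does not depend on `a₁`,
and `a₂ x² + γ₁ = ρ` has exactly `1 + η(a₂) η(ρ - γ₁)` solutions `x`, the number of
square roots of `(ρ - γ₁) / a₂`.
-/

open MvPolynomial Finset

theorem Fintype.prod_comp_eq_prod_pow_card_fiber {ι κ M : Type*} [Fintype ι] [Fintype κ]
    [DecidableEq κ] [CommMonoid M] (f : κ → M) (g : ι → κ) :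
    ∏ i, f (g i) = ∏ k, f k ^ #{i | g i = k} := by
  rw [Finset.prod_comp]
  refine Finset.prod_subset (subset_univ _) fun k _ hk => ?_
  rw [filter_false_of_mem fun i _ (hi : g i = k) => hk (hi ▸ mem_image_of_mem g (mem_univ i)),
    Finset.card_empty, pow_zero]

section FiniteField

variable {F : Type*} [Field F] [Fintype F] {M : Type*} [CommMonoid M]

theorem prod_comp_mul_add {a : F} (ha : a ≠ 0) (b : F) (f : F → M) :
    ∏ x, f (a * x + b) = ∏ x, f x :=
  Fintype.prod_equiv ((Equiv.mulLeft₀ a ha).trans (Equiv.addRight b)) _ _ fun _ => rfl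

theorem prod_comp_mul_sq_add_mul_add (h2 : (2 : F) ≠ 0) {a : F} (ha : a ≠ 0) (b c : F)
    (f : F → M) :
    ∏ x, f (a * x ^ 2 + c * x + b) = ∏ x, f (a * x ^ 2 + (b - c ^ 2 / (4 * a))) := by
  have h4 : (4 : F) ≠ 0 := by simpa [show (4 : F) = 2 ^ 2 by norm_num] using h2
  refine Fintype.prod_equiv (Equiv.addRight (c / (2 * a))) _ _ fun x => ?_
  rw [Equiv.coe_addRight]
  congr 1
  field_simp
  ring

variable [DecidableEq F]

theorem card_filter_mul_sq_add_eq (hF : ringChar F ≠ 2) {a : F} (ha : a ≠ 0) (b c : F) :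
    (#{x : F | a * x ^ 2 + b = c} : ℤ) = 1 + quadraticChar F a * quadraticChar F (c - b) := by
  have hsolve (x : F) : a * x ^ 2 + b = c ↔ x ^ 2 = a * (c - b) * (a⁻¹) ^ 2 := by
    constructor
    · rintro rfl; field_simp; ring
    · intro h; rw [h]; field_simp; ring
  have hsqrts := quadraticChar_card_sqrts hF (a * (c - b) * (a⁻¹) ^ 2)
  rw [Set.toFinset_ofPred, map_mul, quadraticChar_sq_one' (inv_ne_zero ha), mul_one,
    map_mul] at hsqrts
  rw [filter_congr fun x _ => hsolve x, hsqrts, add_comm]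

theorem prod_comp_mul_sq_add (hF : ringChar F ≠ 2) {a : F} (ha : a ≠ 0) (b : F) (f : F → M) :
    ∏ x, f (a * x ^ 2 + b) =
      f b * ∏ ρ ∈ univ.erase b,
        f ρ ^ (1 + quadraticChar F a * quadraticChar F (ρ - b)).toNat := by
  have hcard (ρ : F) :
      #{x | a * x ^ 2 + b = ρ} = (1 + quadraticChar F a * quadraticChar F (ρ - b)).toNat := by
    rw [← card_filter_mul_sq_add_eq hF ha, Int.toNat_natCast]
  rw [Fintype.prod_comp_eq_prod_pow_card_fiber, ← mul_prod_erase univ _ (mem_univ b)]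
  simp only [hcard, sub_self, quadraticChar_zero, mul_zero, add_zero, Int.toNat_one, pow_one]

variable {R : Type*} [CommSemiring R]

theorem sum_sum_prod_comp_mul_add (f : F → R) :
    ∑ b : F, ∑ c : F, ∏ x, f (c * x + b) =
      ∑ ρ, f ρ ^ Fintype.card F +
        ((Fintype.card F - 1) * Fintype.card F : ℕ) * ∏ ρ, f ρ := by
  rw [sum_comm, ← add_sum_erase univ _ (mem_univ 0)]
  congr 1
  · simp only [zero_mul, zero_add, prod_const, card_univ]
  · rw [sum_congr rfl fun c hc => sum_congr rfl fun b _ =>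
      prod_comp_mul_add (ne_of_mem_erase hc) b f]
    simp only [sum_const, card_erase_of_mem (mem_univ _), card_univ, nsmul_eq_mul,
      Nat.cast_mul, mul_assoc]

theorem sum_sum_prod_comp_mul_sq_add_mul_add (hF : ringChar F ≠ 2) {a : F} (ha : a ≠ 0)
    (f : F → R) :
    ∑ b : F, ∑ c : F, ∏ x, f (a * x ^ 2 + c * x + b) =
      Fintype.card F * ∑ γ, f γ * ∏ ρ ∈ univ.erase γ,
        f ρ ^ (1 + quadraticChar F a * quadraticChar F (ρ - γ)).toNat := by
  have hshift (c : F) :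
      ∑ b, ∏ x, f (a * x ^ 2 + c * x + b) = ∑ γ, ∏ x, f (a * x ^ 2 + γ) := by
    simp only [prod_comp_mul_sq_add_mul_add (Ring.two_ne_zero hF) ha _ c]
    exact Fintype.sum_equiv (Equiv.subRight _) _ _ fun _ => rfl
  rw [sum_comm]
  simp only [hshift, sum_const, card_univ, nsmul_eq_mul, prod_comp_mul_sq_add hF ha]

end FiniteField

theorem cwe_ERS3_odd_full_general (p m : ℕ) (hodd : Odd p)
    (F : Type) [Field F] [Fintype F] [DecidableEq F]
    (hcard : Fintype.card F = p ^ m)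
    (α : Fin (p ^ m) → F) (hα : Function.Bijective α) :
    (∑ a₀ : F, ∑ a₁ : F, ∑ a₂ : F,
        (X a₂ : MvPolynomial F ℤ) *
          ∏ i : Fin (p ^ m), (X (a₂ * α i ^ 2 + a₁ * α i + a₀) : MvPolynomial F ℤ))
      = (∑ ρ : F, (X 0 : MvPolynomial F ℤ) * (X ρ : MvPolynomial F ℤ) ^ (p ^ m))
        + (((p ^ m - 1) * p ^ m : ℕ) : MvPolynomial F ℤ) *
            ((X 0 : MvPolynomial F ℤ) * ∏ ρ : F, (X ρ : MvPolynomial F ℤ))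
        + ((p ^ m : ℕ) : MvPolynomial F ℤ) *
            ∑ γ₂ ∈ univ.filter (fun γ₂ : F => γ₂ ≠ 0), ∑ γ₁ : F,
              (X γ₂ : MvPolynomial F ℤ) * (X γ₁ : MvPolynomial F ℤ) *
                ∏ ρ ∈ univ.erase γ₁,
                  (X ρ : MvPolynomial F ℤ)
                    ^ (1 + quadraticChar F γ₂ * quadraticChar F (ρ - γ₁)).toNat := by
  have hF : ringChar F ≠ 2 := by
    rw [Ne, FiniteField.even_card_iff_char_two, hcard]
    exact Nat.mod_two_ne_zero.mpr (Nat.odd_iff.mp hodd.pow)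
  have hreindex (a₀ a₁ a₂ : F) :
      ∏ i, (X (a₂ * α i ^ 2 + a₁ * α i + a₀) : MvPolynomial F ℤ) =
        ∏ x, X (a₂ * x ^ 2 + a₁ * x + a₀) :=
    hα.prod_comp fun x => X (a₂ * x ^ 2 + a₁ * x + a₀)
  calc _ = ∑ a₂, X a₂ * ∑ a₀, ∑ a₁, ∏ x, (X (a₂ * x ^ 2 + a₁ * x + a₀) : MvPolynomial F ℤ) := by
        simp only [hreindex, mul_sum]
        exact sum_comm_cycle
    _ = X 0 * ∑ a₀, ∑ a₁, ∏ x, X (a₁ * x + a₀) + ∑ a₂ ∈ univ.erase 0, X a₂ *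
          ((Fintype.card F : MvPolynomial F ℤ) * ∑ γ₁, X γ₁ * ∏ ρ ∈ univ.erase γ₁,
            X ρ ^ (1 + quadraticChar F a₂ * quadraticChar F (ρ - γ₁)).toNat) := by
        rw [← add_sum_erase univ _ (mem_univ 0)]
        simp only [zero_mul, zero_add]
        exact congrArg _ <| sum_congr rfl fun a₂ h => by
          rw [sum_sum_prod_comp_mul_sq_add_mul_add hF (ne_of_mem_erase h)]
    _ = _ := by
        rw [sum_sum_prod_comp_mul_add, hcard, filter_ne']
        congr 1
        · rw [mul_add, mul_sum, mul_left_comm]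
        · simp only [mul_sum]
          exact sum_congr rfl fun _ _ => sum_congr rfl fun _ _ => by ring

/-- Complete weight enumerator of `ERS_3(α)` over `F_q`, `q = p^m` with `p` an odd prime,
where `α` enumerates all of `F_q`. -/
theorem cwe_ERS3_odd_full (p m : ℕ) (hp : p.Prime) (hodd : Odd p) (hm : 0 < m)
    (F : Type) [Field F] [Fintype F] [DecidableEq F]
    (hcard : Fintype.card F = p ^ m) (h3 : 3 ≤ p ^ m)
    (α : Fin (p ^ m) → F) (hα : Function.Bijective α) :
    (∑ a₀ : F, ∑ a₁ : F, ∑ a₂ : F,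
        (X a₂ : MvPolynomial F ℤ) *
          ∏ i : Fin (p ^ m), (X (a₂ * α i ^ 2 + a₁ * α i + a₀) : MvPolynomial F ℤ))
      = (∑ ρ : F, (X 0 : MvPolynomial F ℤ) * (X ρ : MvPolynomial F ℤ) ^ (p ^ m))
        + (((p ^ m - 1) * p ^ m : ℕ) : MvPolynomial F ℤ) *
            ((X 0 : MvPolynomial F ℤ) * ∏ ρ : F, (X ρ : MvPolynomial F ℤ))
        + ((p ^ m : ℕ) : MvPolynomial F ℤ) *
            ∑ γ₂ ∈ univ.filter (fun γ₂ : F => γ₂ ≠ 0), ∑ γ₁ : F,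
              (X γ₂ : MvPolynomial F ℤ) * (X γ₁ : MvPolynomial F ℤ) *
                ∏ ρ ∈ univ.erase γ₁,
                  (X ρ : MvPolynomial F ℤ)
                    ^ (1 + quadraticChar F γ₂ * quadraticChar F (ρ - γ₁)).toNat :=
  cwe_ERS3_odd_full_general p m hodd F hcard α hα
end

section
/- Let p be an odd prime, m a positive integer, q = p^m ≥ 4, let β ∈ F_q, and let α = (α_1,…,α_{q−1}) be an enumeration of F_q∖{β}. Then the complete weight enumerator of RS_3(α) satisfies W(RS_3(α)) = ∑_{ρ∈F_q} w_ρ^{q−1} + (q−1) ∑_{γ∈F_q} ∏_{ρ∈F_q∖{γ}} w_ρ + ((q−1)/2) ∑_{ε∈{−1,1}} ∑_{γ_1∈F_q} ∏_{ρ∈F_q∖{γ_1}} w_ρ^{1+ε η(ρ−γ_1)} + (q−1) ∑_{ε∈{−1,1}} ∑_{γ_1∈F_q} ∑_{γ_0∈F_q, η(γ_0)=ε} w_{γ_1} w_{γ_0+γ_1} ∏_{ρ∈F_q∖{γ_1, γ_0+γ_1}} w_ρ^{1+ε η(ρ−γ_1)}. -/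
/-!
Write a codeword as `x ↦ a₂ x² + a₁ x + a₀` on `F \ {β}`. For `a₂ = 0` it is constant or an
affine bijection of `F`, which on `F \ {β}` misses exactly its value at `β`. For `a₂ ≠ 0`,
complete the square to `a₂ (x - v)² + γ₁`: on all of `F` this takes the value `ρ` exactly
`1 + η(a₂) η(ρ - γ₁)` times, and puncturing at `β` removes one occurrence of `γ₀ + γ₁`, where
`γ₀ = a₂ (β - v)²` satisfies `η(γ₀) = η(a₂)`. If `v = β` then `γ₀ = 0`, and the nonzero `a₂` fall
into the two classes of `η`, each of size `(q - 1) / 2`. If `v ≠ β` then `a₂ ↦ γ₀` is a bijection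
of `F^*`, so each of the `q - 1` such vertices contributes the same sum over `γ₀ ≠ 0`.
-/

open MvPolynomial Finset

@[to_additive]
theorem prod_erase_comp_equiv {ι M : Type*} [Fintype ι] [DecidableEq ι] [CommMonoid M]
    (e : ι ≃ ι) (β : ι) (g : ι → M) :
    ∏ x ∈ univ.erase β, g (e x) = ∏ y ∈ univ.erase (e β), g y := by
  rw [show univ.erase (e β) = (univ.erase β).map e.toEmbedding by
    rw [map_erase, map_univ_equiv]; rfl, prod_map]
  rfl

theorem prod_comp_eq_prod_erase_of_injective {ι α M : Type*} [Fintype ι] [Fintype α]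
    [DecidableEq α] [CommMonoid M] {f : ι → α} (hf : Function.Injective f) {β : α}
    (hβ : ∀ i, f i ≠ β) (hcard : Fintype.card ι = Fintype.card α - 1) (g : α → M) :
    ∏ i, g (f i) = ∏ x ∈ univ.erase β, g x := by
  rw [← prod_image hf.injOn]
  congr
  refine eq_of_subset_of_card_le (fun x hx ↦ ?_) ?_
  · obtain ⟨i, -, rfl⟩ := mem_image.mp hx
    exact mem_erase.mpr ⟨hβ i, mem_univ _⟩
  · rw [card_image_of_injective _ hf, card_univ, hcard, card_erase_of_mem (mem_univ β), card_univ]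

section FiniteField

variable {F : Type*} [Field F] [Fintype F]

theorem sum_sum_quadratic_eq_sum_sum_vertex (hF : ringChar F ≠ 2) {a : F} (ha : a ≠ 0)
    {M : Type*} [AddCommMonoid M] (Φ : (F → F) → M) :
    ∑ b, ∑ c, Φ (fun x ↦ a * x ^ 2 + b * x + c) = ∑ v, ∑ γ, Φ (fun x ↦ a * (x - v) ^ 2 + γ) := by
  have h2a : -(2 * a) ≠ 0 := neg_ne_zero.mpr (mul_ne_zero (Ring.two_ne_zero hF) ha)
  refine (Fintype.sum_equiv (Equiv.mulLeft₀ _ h2a) _ _ fun v ↦ ?_).symm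
  refine Fintype.sum_equiv (Equiv.addRight (a * v ^ 2)) _ _ fun γ ↦ ?_
  congr 1
  funext x
  simp only [Equiv.mulLeft₀_apply, Equiv.coe_addRight]
  ring

variable [DecidableEq F]

theorem sum_erase_zero_eq_sum_quadraticChar {M : Type*} [AddCommMonoid M] (g : F → M) :
    ∑ a ∈ univ.erase 0, g a
      = ∑ ε ∈ ({-1, 1} : Finset ℤ), ∑ a with quadraticChar F a = ε, g a := by
  rw [← sum_fiberwise_of_maps_to (g := quadraticChar F) (t := {-1, 1})
    fun a ha ↦ by simpa [or_comm] using quadraticChar_dichotomy (ne_of_mem_erase ha)]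
  refine sum_congr rfl fun ε hε ↦ ?_
  rw [filter_erase, erase_eq_of_notMem]
  have : ε ≠ 0 := by rintro rfl; simp at hε
  simpa [quadraticChar_zero] using this.symm

theorem card_quadraticChar_eq (hF : ringChar F ≠ 2) {ε : ℤ} (hε : ε ∈ ({-1, 1} : Finset ℤ)) :
    #{a : F | quadraticChar F a = ε} = (Fintype.card F - 1) / 2 := by
  have hcard : Fintype.card F - 1 =
      #{a : F | quadraticChar F a = -1} + #{a : F | quadraticChar F a = 1} := by
    have := sum_erase_zero_eq_sum_quadraticChar (F := F) (fun _ ↦ (1 : ℕ))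
    rwa [sum_pair (by norm_num), ← card_eq_sum_ones, ← card_eq_sum_ones, ← card_eq_sum_ones,
      card_erase_of_mem (mem_univ _), card_univ] at this
  have hsum : ∑ a ∈ univ.erase (0 : F), quadraticChar F a = 0 := by
    rw [sum_erase _ (quadraticChar_zero)]; exact quadraticChar_sum_zero hF
  rw [sum_erase_zero_eq_sum_quadraticChar, sum_pair (by norm_num)] at hsum
  rw [sum_congr rfl fun a ha ↦ (mem_filter.mp ha).2, sum_congr rfl fun a ha ↦ (mem_filter.mp ha).2,
    sum_const, sum_const, smul_neg, nsmul_eq_mul, nsmul_eq_mul, mul_one] at hsum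
  simp only [mem_insert, mem_singleton] at hε
  rcases hε with rfl | rfl <;> omega

theorem sum_erase_zero_comp_quadraticChar (hF : ringChar F ≠ 2) {M : Type*} [AddCommMonoid M]
    (f : ℤ → M) :
    ∑ a ∈ univ.erase 0, f (quadraticChar F a)
      = ((Fintype.card F - 1) / 2) • ∑ ε ∈ ({-1, 1} : Finset ℤ), f ε := by
  rw [sum_erase_zero_eq_sum_quadraticChar, smul_sum]
  refine sum_congr rfl fun ε hε ↦ ?_
  rw [sum_congr rfl fun a ha ↦ by rw [(mem_filter.mp ha).2], sum_const, card_quadraticChar_eq hF hε]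

theorem card_filter_mul_sub_sq_add_eq (hF : ringChar F ≠ 2) {a : F} (ha : a ≠ 0) (v γ ρ : F) :
    (#{x : F | a * (x - v) ^ 2 + γ = ρ} : ℤ)
      = 1 + quadraticChar F a * quadraticChar F (ρ - γ) := by
  have hcard : #{x : F | a * (x - v) ^ 2 + γ = ρ} = #{z : F | z ^ 2 = a * (ρ - γ)} := by
    refine card_nbij' (fun x ↦ a * (x - v)) (fun z ↦ z / a + v) ?_ ?_ ?_ ?_
    · intro x hx
      simp only [coe_filter, mem_univ, true_and, Set.mem_ofPred_eq] at hx ⊢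
      linear_combination a * hx
    · intro z hz
      simp only [coe_filter, mem_univ, true_and, Set.mem_ofPred_eq] at hz ⊢
      field_simp
      linear_combination hz
    · intro x _; field_simp; ring
    · intro z _; field_simp; ring
  have := quadraticChar_card_sqrts hF (a * (ρ - γ))
  rw [Set.toFinset_ofPred] at this
  rw [hcard, this, map_mul, add_comm]

theorem prod_mul_sub_sq_add {M : Type*} [CommMonoid M] (hF : ringChar F ≠ 2) {a : F} (ha : a ≠ 0)
    (v γ : F) (f : F → M) :
    ∏ x, f (a * (x - v) ^ 2 + γ)
      = ∏ ρ, f ρ ^ (1 + quadraticChar F a * quadraticChar F (ρ - γ)).toNat := by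
  rw [← prod_fiberwise univ (fun x ↦ a * (x - v) ^ 2 + γ)]
  refine prod_congr rfl fun ρ _ ↦ ?_
  rw [prod_congr rfl fun x hx ↦ by rw [(mem_filter.mp hx).2], prod_const,
    ← card_filter_mul_sub_sq_add_eq hF ha v γ ρ, Int.toNat_natCast]

variable {R : Type*} [CommSemiring R]

theorem prod_erase_X_mul_sub_sq_add_same (hF : ringChar F ≠ 2) {a : F} (ha : a ≠ 0) (β γ : F) :
    ∏ x ∈ univ.erase β, (X (a * (x - β) ^ 2 + γ) : MvPolynomial F R)
      = ∏ ρ ∈ univ.erase γ, X ρ ^ (1 + quadraticChar F a * quadraticChar F (ρ - γ)).toNat := by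
  rw [← X_mul_cancel_left_iff (i := γ)]
  convert (mul_prod_erase univ (fun x ↦ (X (a * (x - β) ^ 2 + γ) : MvPolynomial F R))
    (mem_univ β)).trans (prod_mul_sub_sq_add hF ha β γ X) using 1
  · simp
  · rw [← mul_prod_erase univ _ (mem_univ γ)]
    simp

theorem prod_erase_X_mul_sub_sq_add_of_ne (hF : ringChar F ≠ 2) {a v β : F} (ha : a ≠ 0)
    (hv : v ≠ β) (γ : F) :
    ∏ x ∈ univ.erase β, (X (a * (x - v) ^ 2 + γ) : MvPolynomial F R)
      = X γ * X (a * (β - v) ^ 2 + γ) *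
          ∏ ρ ∈ univ \ {γ, a * (β - v) ^ 2 + γ},
            X ρ ^ (1 + quadraticChar F a * quadraticChar F (ρ - γ)).toNat := by
  set γ₀ := a * (β - v) ^ 2 with hγ₀_def
  have hβv : β - v ≠ 0 := sub_ne_zero.mpr hv.symm
  have hγ₀ : quadraticChar F γ₀ = quadraticChar F a := by
    rw [hγ₀_def, map_mul, map_pow, quadraticChar_sq_one hβv, mul_one]
  have hne : γ ≠ γ₀ + γ := by
    intro h
    exact mul_ne_zero ha (pow_ne_zero 2 hβv) (by linear_combination -h)
  rw [← X_mul_cancel_left_iff (i := γ₀ + γ)]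
  convert (mul_prod_erase univ (fun x ↦ (X (a * (x - v) ^ 2 + γ) : MvPolynomial F R))
    (mem_univ β)).trans (prod_mul_sub_sq_add hF ha v γ X) using 1
  rw [← prod_sdiff (subset_univ {γ, γ₀ + γ}), prod_pair hne, sub_self, add_sub_cancel_right, hγ₀,
    ← sq, quadraticChar_sq_one ha, quadraticChar_zero, mul_zero, add_zero, Int.toNat_one, pow_one,
    show ((1 : ℤ) + 1).toNat = 2 from rfl]
  ring

theorem sum_prod_erase_affine {a : F} (ha : a ≠ 0) (β : F) (f : F → R) :
    ∑ c, ∏ x ∈ univ.erase β, f (a * x + c) = ∑ γ, ∏ ρ ∈ univ.erase γ, f ρ :=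
  Fintype.sum_equiv (Equiv.addLeft (a * β)) _ _ fun c ↦
    prod_erase_comp_equiv ((Equiv.mulLeft₀ a ha).trans (Equiv.addRight c)) β f

theorem sum_sum_prod_erase_X_same (hF : ringChar F ≠ 2) (β : F) :
    ∑ a ∈ univ.erase 0, ∑ γ, ∏ x ∈ univ.erase β, (X (a * (x - β) ^ 2 + γ) : MvPolynomial F R)
      = (((Fintype.card F - 1) / 2 : ℕ) : MvPolynomial F R) *
          ∑ ε ∈ ({-1, 1} : Finset ℤ), ∑ γ,
            ∏ ρ ∈ univ.erase γ, X ρ ^ (1 + ε * quadraticChar F (ρ - γ)).toNat := by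
  rw [sum_congr rfl fun a ha ↦ sum_congr rfl fun γ _ ↦
      prod_erase_X_mul_sub_sq_add_same hF (ne_of_mem_erase ha) β γ,
    sum_erase_zero_comp_quadraticChar hF (fun ε ↦ ∑ γ : F, ∏ ρ ∈ univ.erase γ,
      (X ρ : MvPolynomial F R) ^ (1 + ε * quadraticChar F (ρ - γ)).toNat), nsmul_eq_mul]

theorem sum_sum_sum_prod_erase_X_of_ne (hF : ringChar F ≠ 2) (β : F) :
    ∑ a ∈ univ.erase 0, ∑ v ∈ univ.erase β, ∑ γ,
        ∏ x ∈ univ.erase β, (X (a * (x - v) ^ 2 + γ) : MvPolynomial F R)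
      = ((Fintype.card F - 1 : ℕ) : MvPolynomial F R) *
          ∑ ε ∈ ({-1, 1} : Finset ℤ), ∑ γ₁, ∑ γ₀ with quadraticChar F γ₀ = ε,
            X γ₁ * X (γ₀ + γ₁) *
              ∏ ρ ∈ univ \ {γ₁, γ₀ + γ₁}, X ρ ^ (1 + ε * quadraticChar F (ρ - γ₁)).toNat := by
  set T : F → MvPolynomial F R := fun γ₀ ↦ ∑ γ₁, X γ₁ * X (γ₀ + γ₁) *
    ∏ ρ ∈ univ \ {γ₁, γ₀ + γ₁}, X ρ ^ (1 + quadraticChar F γ₀ * quadraticChar F (ρ - γ₁)).toNat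
  have hterm : ∀ a ∈ univ.erase 0, ∀ v ∈ univ.erase β,
      ∑ γ, ∏ x ∈ univ.erase β, (X (a * (x - v) ^ 2 + γ) : MvPolynomial F R)
        = T (a * (β - v) ^ 2) := by
    intro a ha v hv
    have hη : quadraticChar F (a * (β - v) ^ 2) = quadraticChar F a := by
      rw [map_mul, map_pow, quadraticChar_sq_one (sub_ne_zero.mpr (ne_of_mem_erase hv).symm),
        mul_one]
    simp only [T, hη]
    exact sum_congr rfl fun γ _ ↦
      prod_erase_X_mul_sub_sq_add_of_ne hF (ne_of_mem_erase ha) (ne_of_mem_erase hv) γ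
  have hscale : ∀ v ∈ univ.erase β, ∑ a ∈ univ.erase 0, T (a * (β - v) ^ 2)
      = ∑ γ₀ ∈ univ.erase 0, T γ₀ := by
    intro v hv
    have hc : (β - v) ^ 2 ≠ 0 := pow_ne_zero 2 (sub_ne_zero.mpr (ne_of_mem_erase hv).symm)
    simpa using sum_erase_comp_equiv (Equiv.mulRight₀ _ hc) 0 T
  calc _ = ∑ v ∈ univ.erase β, ∑ a ∈ univ.erase 0, T (a * (β - v) ^ 2) := by
        rw [sum_comm]
        exact sum_congr rfl fun v hv ↦ sum_congr rfl fun a ha ↦ hterm a ha v hv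
    _ = (Fintype.card F - 1) • ∑ γ₀ ∈ univ.erase 0, T γ₀ := by
        rw [sum_congr rfl hscale, sum_const, card_erase_of_mem (mem_univ β), card_univ]
    _ = _ := by
        rw [nsmul_eq_mul, sum_erase_zero_eq_sum_quadraticChar]
        refine congrArg _ (sum_congr rfl fun ε _ ↦ ?_)
        refine (sum_congr rfl fun γ₀ hγ₀ ↦ ?_).trans sum_comm
        simp only [T, (mem_filter.mp hγ₀).2]

variable (R) in
noncomputable def rs3PuncturedCWE (β : F) : MvPolynomial F R :=
  ∑ a₂ : F, ∑ a₁ : F, ∑ a₀ : F, ∏ x ∈ univ.erase β, X (a₂ * x ^ 2 + a₁ * x + a₀)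

theorem rs3PuncturedCWE_eq (hF : ringChar F ≠ 2) (β : F) :
    rs3PuncturedCWE R β
      = ∑ ρ, X ρ ^ (Fintype.card F - 1)
        + ((Fintype.card F - 1 : ℕ) : MvPolynomial F R) * ∑ γ, ∏ ρ ∈ univ.erase γ, X ρ
        + (((Fintype.card F - 1) / 2 : ℕ) : MvPolynomial F R) *
            ∑ ε ∈ ({-1, 1} : Finset ℤ), ∑ γ₁,
              ∏ ρ ∈ univ.erase γ₁, X ρ ^ (1 + ε * quadraticChar F (ρ - γ₁)).toNat
        + ((Fintype.card F - 1 : ℕ) : MvPolynomial F R) *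
            ∑ ε ∈ ({-1, 1} : Finset ℤ), ∑ γ₁, ∑ γ₀ with quadraticChar F γ₀ = ε,
              X γ₁ * X (γ₀ + γ₁) *
                ∏ ρ ∈ univ \ {γ₁, γ₀ + γ₁}, X ρ ^ (1 + ε * quadraticChar F (ρ - γ₁)).toNat := by
  have hcard : #(univ.erase β) = Fintype.card F - 1 := by
    rw [card_erase_of_mem (mem_univ β), card_univ]
  have hconst : ∑ a₀, ∏ x ∈ univ.erase β, (X (0 * x ^ 2 + 0 * x + a₀) : MvPolynomial F R)
      = ∑ ρ, X ρ ^ (Fintype.card F - 1) := by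
    simp only [zero_mul, zero_add, prod_const, hcard]
  have haffine : ∑ a₁ ∈ univ.erase 0, ∑ a₀,
      ∏ x ∈ univ.erase β, (X (0 * x ^ 2 + a₁ * x + a₀) : MvPolynomial F R)
        = ((Fintype.card F - 1 : ℕ) : MvPolynomial F R) * ∑ γ, ∏ ρ ∈ univ.erase γ, X ρ := by
    simp only [zero_mul, zero_add]
    rw [sum_congr rfl fun a₁ h ↦ sum_prod_erase_affine (ne_of_mem_erase h) β X, sum_const,
      card_erase_of_mem (mem_univ 0), card_univ, nsmul_eq_mul]
  have hquadratic : ∑ a₂ ∈ univ.erase 0, ∑ a₁, ∑ a₀,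
      ∏ x ∈ univ.erase β, (X (a₂ * x ^ 2 + a₁ * x + a₀) : MvPolynomial F R)
        = ∑ a₂ ∈ univ.erase 0, ∑ γ, ∏ x ∈ univ.erase β, X (a₂ * (x - β) ^ 2 + γ)
          + ∑ a₂ ∈ univ.erase 0, ∑ v ∈ univ.erase β, ∑ γ,
              ∏ x ∈ univ.erase β, X (a₂ * (x - v) ^ 2 + γ) := by
    rw [← sum_add_distrib]
    refine sum_congr rfl fun a₂ h ↦ ?_
    refine (sum_sum_quadratic_eq_sum_sum_vertex hF (ne_of_mem_erase h)
      (fun g ↦ ∏ x ∈ univ.erase β, (X (g x) : MvPolynomial F R))).trans ?_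
    exact (add_sum_erase univ (fun v ↦ ∑ γ, ∏ x ∈ univ.erase β,
      (X (a₂ * (x - v) ^ 2 + γ) : MvPolynomial F R)) (mem_univ β)).symm
  rw [rs3PuncturedCWE, ← add_sum_erase _ _ (mem_univ 0), ← add_sum_erase _ _ (mem_univ 0),
    hconst, haffine, hquadratic, sum_sum_prod_erase_X_same hF, sum_sum_sum_prod_erase_X_of_ne hF]
  simp only [add_assoc]

end FiniteField

theorem cwe_RS3_odd_punctured_general (p m : ℕ) (hodd : Odd p)
    (F : Type) [Field F] [Fintype F] [DecidableEq F]
    (hcard : Fintype.card F = p ^ m)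
    (β : F) (α : Fin (p ^ m - 1) → F) (hα : Function.Injective α)
    (hβ : ∀ i, α i ≠ β) :
    (∑ a₀ : F, ∑ a₁ : F, ∑ a₂ : F,
        ∏ i : Fin (p ^ m - 1), (X (a₂ * α i ^ 2 + a₁ * α i + a₀) : MvPolynomial F ℤ))
      = (∑ ρ : F, (X ρ : MvPolynomial F ℤ) ^ (p ^ m - 1))
        + ((p ^ m - 1 : ℕ) : MvPolynomial F ℤ) *
            ∑ γ : F, ∏ ρ ∈ univ.erase γ, (X ρ : MvPolynomial F ℤ)
        + (((p ^ m - 1) / 2 : ℕ) : MvPolynomial F ℤ) *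
            ∑ ε ∈ ({-1, 1} : Finset ℤ), ∑ γ₁ : F,
              ∏ ρ ∈ univ.erase γ₁,
                (X ρ : MvPolynomial F ℤ) ^ (1 + ε * quadraticChar F (ρ - γ₁)).toNat
        + ((p ^ m - 1 : ℕ) : MvPolynomial F ℤ) *
            ∑ ε ∈ ({-1, 1} : Finset ℤ), ∑ γ₁ : F,
              ∑ γ₀ ∈ univ.filter (fun γ₀ : F => quadraticChar F γ₀ = ε),
                (X γ₁ : MvPolynomial F ℤ) * (X (γ₀ + γ₁) : MvPolynomial F ℤ) *
                  ∏ ρ ∈ univ \ {γ₁, γ₀ + γ₁},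
                    (X ρ : MvPolynomial F ℤ) ^ (1 + ε * quadraticChar F (ρ - γ₁)).toNat := by
  have hF : ringChar F ≠ 2 := by
    rw [Ne, FiniteField.even_card_iff_char_two, hcard, ← Nat.even_iff, Nat.not_even_iff_odd]
    exact hodd.pow
  have hα_card : Fintype.card (Fin (p ^ m - 1)) = Fintype.card F - 1 := by
    rw [Fintype.card_fin, hcard]
  have hW := rs3PuncturedCWE_eq (R := ℤ) hF β
  rw [hcard] at hW
  rw [← hW, rs3PuncturedCWE, sum_comm_cycle]
  refine sum_congr rfl fun a₂ _ ↦
    sum_comm.trans (sum_congr rfl fun a₁ _ ↦ sum_congr rfl fun a₀ _ ↦ ?_)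
  exact prod_comp_eq_prod_erase_of_injective hα hβ hα_card fun x ↦ X (a₂ * x ^ 2 + a₁ * x + a₀)

/-- Complete weight enumerator of `RS_3(α)` over `F_q`, `q = p^m` with `p` an odd prime,
where `α` enumerates `F_q \ {β}`. -/
theorem cwe_RS3_odd_punctured (p m : ℕ) (hp : p.Prime) (hodd : Odd p) (hm : 0 < m)
    (F : Type) [Field F] [Fintype F] [DecidableEq F]
    (hcard : Fintype.card F = p ^ m) (h4 : 4 ≤ p ^ m)
    (β : F) (α : Fin (p ^ m - 1) → F) (hα : Function.Injective α)
    (hβ : ∀ i, α i ≠ β) :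
    (∑ a₀ : F, ∑ a₁ : F, ∑ a₂ : F,
        ∏ i : Fin (p ^ m - 1), (X (a₂ * α i ^ 2 + a₁ * α i + a₀) : MvPolynomial F ℤ))
      = (∑ ρ : F, (X ρ : MvPolynomial F ℤ) ^ (p ^ m - 1))
        + ((p ^ m - 1 : ℕ) : MvPolynomial F ℤ) *
            ∑ γ : F, ∏ ρ ∈ univ.erase γ, (X ρ : MvPolynomial F ℤ)
        + (((p ^ m - 1) / 2 : ℕ) : MvPolynomial F ℤ) *
            ∑ ε ∈ ({-1, 1} : Finset ℤ), ∑ γ₁ : F,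
              ∏ ρ ∈ univ.erase γ₁,
                (X ρ : MvPolynomial F ℤ) ^ (1 + ε * quadraticChar F (ρ - γ₁)).toNat
        + ((p ^ m - 1 : ℕ) : MvPolynomial F ℤ) *
            ∑ ε ∈ ({-1, 1} : Finset ℤ), ∑ γ₁ : F,
              ∑ γ₀ ∈ univ.filter (fun γ₀ : F => quadraticChar F γ₀ = ε),
                (X γ₁ : MvPolynomial F ℤ) * (X (γ₀ + γ₁) : MvPolynomial F ℤ) *
                  ∏ ρ ∈ univ \ {γ₁, γ₀ + γ₁},
                    (X ρ : MvPolynomial F ℤ) ^ (1 + ε * quadraticChar F (ρ - γ₁)).toNat :=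
  cwe_RS3_odd_punctured_general p m hodd F hcard β α hα hβ
end
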